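/- In the data-accumulation linear regression setting, for every n ≥ 1, the least-squares estimator on the accumulated data satisfies ŵ_n = w* + (XᵀX)⁻¹ Xᵀ (Σ_{i=1}^{n} E_i/i). -/

import Mathlib

open Finset Matrix

/-- In the data-accumulation linear regression setting, for every `n ≥ 1`, the
least-squares estimator on the accumulated data satisfies
`ŵ_n = w* + (XᵀX)⁻¹ Xᵀ (∑_{i=1}^{n} E_i/i)`. -/
theorem accumulated_estimator_closed_form {T d : ℕ}
    (X : Matrix (Fin T) (Fin d) ℝ) (hX : IsUnit (Xᵀ * X))
    (wstar : Fin d → ℝ) (E : ℕ → Fin T → ℝ)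
    (Yhat : ℕ → Fin T → ℝ) (what : ℕ → Fin d → ℝ)
    (hY1 : Yhat 1 = X.mulVec wstar + E 1)
    (hYs : ∀ i, 1 ≤ i → Yhat (i + 1) = X.mulVec (what i) + E (i + 1))
    (hw : ∀ i, 1 ≤ i → what i =
      ((i : ℝ)⁻¹) • (Xᵀ * X)⁻¹.mulVec (∑ k ∈ Finset.Icc 1 i, Xᵀ.mulVec (Yhat k)))
    (n : ℕ) (hn : 1 ≤ n) :
    what n = wstar + (Xᵀ * X)⁻¹.mulVec (Xᵀ.mulVec (∑ i ∈ Finset.Icc 1 n, ((i : ℝ)⁻¹) • E i)) := by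
  have hdet : IsUnit (Xᵀ * X).det := (Matrix.isUnit_iff_isUnit_det _).mp hX
  have hinv : (Xᵀ * X)⁻¹ * (Xᵀ * X) = 1 := Matrix.nonsing_inv_mul _ hdet
  have key : ∀ v : Fin d → ℝ, (Xᵀ * X)⁻¹.mulVec (Xᵀ.mulVec (X.mulVec v)) = v := by
    intro v
    rw [Matrix.mulVec_mulVec, Matrix.mulVec_mulVec, Matrix.mul_assoc, hinv, Matrix.one_mulVec]
  induction n, hn using Nat.le_induction with
  | base =>
    rw [hw 1 le_rfl]
    simp only [Finset.Icc_self, Finset.sum_singleton, hY1, Nat.cast_one, inv_one, one_smul,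
      Matrix.mulVec_add, key]
  | succ n hn ih =>
    have hN : (n : ℝ) ≠ 0 := by positivity
    have hN1 : ((n : ℝ) + 1) ≠ 0 := by positivity
    have hsum : (Xᵀ * X)⁻¹.mulVec (∑ k ∈ Finset.Icc 1 n, Xᵀ.mulVec (Yhat k))
        = (n : ℝ) • what n := by
      rw [hw n hn, smul_smul, mul_inv_cancel₀ hN, one_smul]
    rw [hw (n + 1) (by omega), Finset.sum_Icc_succ_top (by omega : 1 ≤ n + 1),
      Matrix.mulVec_add, hsum, hYs n hn, Matrix.mulVec_add, Matrix.mulVec_add, key,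
      Finset.sum_Icc_succ_top (by omega : 1 ≤ n + 1), Matrix.mulVec_add, Matrix.mulVec_add]
    rw [ih]
    push_cast
    rw [Matrix.mulVec_smul, Matrix.mulVec_smul]
    set u := (Xᵀ * X)⁻¹.mulVec (Xᵀ.mulVec (∑ i ∈ Finset.Icc 1 n, ((i : ℝ)⁻¹) • E i))
    set e := (Xᵀ * X)⁻¹.mulVec (Xᵀ.mulVec (E (n + 1)))
    have h2 : (↑n:ℝ) • (wstar + u) + (wstar + u + e) = ((↑n:ℝ)+1) • (wstar + u) + e := by
      module
    rw [h2, smul_add, smul_smul, inv_mul_cancel₀ hN1, one_smul]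
    abel
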